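/- arXiv:1202.5253 — 3 statements merged into one kernel-verified Lean document; each statement's English description precedes it below -/
import Mathlib

section
/- The number of punctured link patterns on 2n points (non-crossing pairings of 2n cyclically ordered points on the boundary of a punctured disk, where each arc is additionally distinguished by whether it passes left or right of the puncture) equals (n+1)·C_n, where C_n is the n-th Catalan number. -/
/-- A link pattern on `2n` points: a fixed-point-free non-crossing involution of `Fin (2n)`. -/
def IsLinkPattern (n : ℕ) (f : Fin (2 * n) → Fin (2 * n)) : Prop :=
  Function.Involutive f ∧ (∀ i, f i ≠ i) ∧
    ∀ i j : Fin (2 * n),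
      ¬ ((i : ℕ) < (j : ℕ) ∧ (j : ℕ) < (f i : ℕ) ∧ (f i : ℕ) < (f j : ℕ))

/-- A punctured link pattern on `2n` points: a non-crossing perfect matching `f`
together with the datum of the position of the puncture, encoded by the innermost
arc enclosing the puncture (`some i` with `i` the smaller endpoint of that arc,
i.e. `i < f i`), or `none` if no arc encloses the puncture (the puncture sits in
the outer region next to the boundary).  This is exactly the extra datum
distinguishing, among the nested arcs, which ones pass left or right of the
puncture. -/
def IsPuncturedLinkPattern (n : ℕ)
    (p : (Fin (2 * n) → Fin (2 * n)) × Option (Fin (2 * n))) : Prop :=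
  IsLinkPattern n p.1 ∧ ∀ i, p.2 = some i → (i : ℕ) < (p.1 i : ℕ)


/-! Forgetting the puncture, a punctured link pattern is a link pattern `f` together with either
nothing or one of its `n` arcs, so it suffices to count link patterns by `catalan n`. Reading a
point as an up step if it opens an arc and as a down step if it closes one turns a link pattern
into a Dyck path whose height after `m` steps is the number of arcs crossing the cut at `m`.
Conversely, in a Dyck path an up step is matched with the first later step returning to its
height; this matching is non-crossing and recovers the link pattern. -/

open Finset Function DyckStep

/-- The up step at `i` and the down step at `j` of the lattice path with heights `h` face each
other: the path leaves height `h i` at step `i` and first comes back to it after step `j`. -/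
def IsArc (h : ℕ → ℤ) (i j : ℕ) : Prop :=
  i < j ∧ h (j + 1) = h i ∧ ∀ m, i < m → m ≤ j → h i < h m

def IsPartner (h : ℕ → ℤ) (i j : ℕ) : Prop :=
  IsArc h i j ∨ IsArc h j i

namespace IsArc

variable {h : ℕ → ℤ} {i j : ℕ}

lemma lt_succ_left (hij : IsArc h i j) : h i < h (i + 1) :=
  hij.2.2 (i + 1) (Nat.lt_succ_self i) hij.1

lemma succ_lt_right (hij : IsArc h i j) : h (j + 1) < h j :=
  hij.2.1 ▸ hij.2.2 j hij.1 le_rfl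

lemma right_unique {j' : ℕ} (hij : IsArc h i j) (hij' : IsArc h i j') : j = j' := by
  obtain ⟨hlt, hret, hpos⟩ := hij
  obtain ⟨hlt', hret', hpos'⟩ := hij'
  by_contra hne
  rcases Nat.lt_or_gt_of_ne hne with hjj | hjj
  · exact (hpos' (j + 1) (by omega) hjj).ne' hret
  · exact (hpos (j' + 1) (by omega) hjj).ne' hret'

lemma left_unique {i' : ℕ} (hij : IsArc h i j) (hi'j : IsArc h i' j) : i = i' := by
  obtain ⟨hlt, hret, hpos⟩ := hij
  obtain ⟨hlt', hret', hpos'⟩ := hi'j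
  by_contra hne
  rcases Nat.lt_or_gt_of_ne hne with hii | hii
  · exact (hpos i' hii hlt'.le).ne (hret ▸ hret')
  · exact (hpos' i hii hlt.le).ne (hret' ▸ hret)

lemma not_cross {i' j' : ℕ} (hij : IsArc h i j) (hij' : IsArc h i' j')
    (hi : i < i') (hi' : i' < j) (hj : j < j') : False := by
  have := hij.2.2 i' hi hi'.le
  have := hij'.2.2 (j + 1) (by omega) hj
  have := hij.2.1
  omega

end IsArc

namespace IsPartner

variable {h : ℕ → ℤ} {i j : ℕ}

lemma symm (hij : IsPartner h i j) : IsPartner h j i :=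
  Or.symm hij

lemma unique {k : ℕ} (hij : IsPartner h i j) (hik : IsPartner h i k) : j = k := by
  rcases hij with hij | hji <;> rcases hik with hik | hki
  · exact hij.right_unique hik
  · exact absurd hij.lt_succ_left hki.succ_lt_right.not_gt
  · exact absurd hik.lt_succ_left hji.succ_lt_right.not_gt
  · exact hji.left_unique hki

lemma isArc_of_lt (hij : IsPartner h i j) (hlt : i < j) : IsArc h i j :=
  hij.resolve_right fun hji => absurd hji.1 hlt.not_gt

lemma isArc_of_gt (hij : IsPartner h i j) (hgt : j < i) : IsArc h j i :=
  hij.resolve_left fun hij => absurd hij.1 hgt.not_gt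

end IsPartner

lemma exists_isArc_of_lt_succ {h : ℕ → ℤ} (hstep : ∀ k, |h (k + 1) - h k| ≤ 1) {i b : ℕ}
    (hup : h i < h (i + 1)) (hib : i < b) (hb : h b ≤ h i) : ∃ j, IsArc h i j ∧ j < b := by
  classical
  -- the first time after `i` that the path is at or below `h i`; unit steps make it land on `h i`
  have hex : ∃ m, i < m ∧ h m ≤ h i := ⟨b, hib, hb⟩
  obtain ⟨him, hm⟩ := Nat.find_spec hex
  have hmin : ∀ k, i < k → k < Nat.find hex → h i < h k := fun k hik hk =>
    not_le.mp fun hle => Nat.find_min hex hk ⟨hik, hle⟩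
  have hfind := Nat.find_min' hex ⟨hib, hb⟩
  obtain ⟨j, hj⟩ : ∃ j, Nat.find hex = j + 1 := Nat.exists_eq_succ_of_ne_zero (by omega)
  rw [hj] at him hm hmin hfind
  have hij : i < j := by
    by_contra hji
    obtain rfl : j = i := by omega
    omega
  have := hmin j hij (by omega)
  have := abs_le.mp (hstep j)
  exact ⟨j, ⟨hij, by omega, fun k hik hkj => hmin k hik (by omega)⟩, by omega⟩

lemma exists_isArc_of_succ_lt {h : ℕ → ℤ} (hstep : ∀ k, |h (k + 1) - h k| ≤ 1) {j a : ℕ}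
    (hdown : h (j + 1) < h j) (haj : a ≤ j) (ha : h a ≤ h (j + 1)) :
    ∃ i, IsArc h i j ∧ a ≤ i := by
  classical
  let P : ℕ → Prop := fun m => a ≤ m ∧ h m ≤ h (j + 1)
  have hspec : P (Nat.findGreatest P j) := Nat.findGreatest_spec haj ⟨le_rfl, ha⟩
  have hmax : ∀ k, Nat.findGreatest P j < k → k ≤ j → h (j + 1) < h k := fun k hk hkj =>
    not_le.mp fun hle => Nat.findGreatest_is_greatest hk hkj ⟨by have := hspec.1; omega, hle⟩
  set i := Nat.findGreatest P j
  have hij : i < j := lt_of_le_of_ne (Nat.findGreatest_le j) fun hij => by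
    have := hspec.2; rw [hij] at this; omega
  have := hmax (i + 1) (by omega) (by omega)
  have := abs_le.mp (hstep i)
  have hret : h (j + 1) = h i := by have := hspec.2; omega
  exact ⟨i, ⟨hij, hret, fun k hik hkj => hret ▸ hmax k hik hkj⟩, hspec.1⟩

def DyckStep.toInt : DyckStep → ℤ
  | U => 1
  | D => -1

lemma DyckStep.sum_map_toInt (l : List DyckStep) : (l.map toInt).sum = l.count U - l.count D := by
  induction l with
  | nil => simp
  | cons s l ih => cases s <;> simp [toInt, ih] <;> ring

section dyckHeight

open List

def dyckHeight (l : List DyckStep) (m : ℕ) : ℤ := ((l.take m).map toInt).sum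

variable (l : List DyckStep)

@[simp] lemma dyckHeight_zero : dyckHeight l 0 = 0 := by simp [dyckHeight]

lemma dyckHeight_eq_count_sub_count (m : ℕ) :
    dyckHeight l m = (l.take m).count U - (l.take m).count D :=
  sum_map_toInt _

lemma dyckHeight_succ {k : ℕ} (hk : k < l.length) :
    dyckHeight l (k + 1) = dyckHeight l k + l[k].toInt := by
  rw [dyckHeight, dyckHeight, map_take, map_take, sum_take_succ _ _ (by simpa), getElem_map]

lemma dyckHeight_of_length_le {m : ℕ} (hm : l.length ≤ m) :
    dyckHeight l m = dyckHeight l l.length := by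
  simp [dyckHeight, take_of_length_le hm]

lemma abs_dyckHeight_succ_sub_le (k : ℕ) : |dyckHeight l (k + 1) - dyckHeight l k| ≤ 1 := by
  rcases lt_or_ge k l.length with hk | hk
  · rw [dyckHeight_succ l hk]; cases l[k] <;> simp [toInt]
  · rw [dyckHeight_of_length_le l hk, dyckHeight_of_length_le l (by omega)]; simp

lemma getElem_eq_U_iff_dyckHeight_lt {k : ℕ} (hk : k < l.length) :
    l[k] = U ↔ dyckHeight l k < dyckHeight l (k + 1) := by
  rw [dyckHeight_succ l hk]; cases l[k] <;> simp [toInt]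

lemma getElem_eq_D_iff_dyckHeight_lt {k : ℕ} (hk : k < l.length) :
    l[k] = D ↔ dyckHeight l (k + 1) < dyckHeight l k := by
  rw [dyckHeight_succ l hk]; cases l[k] <;> simp [toInt]

lemma DyckWord.dyckHeight_nonneg (p : DyckWord) (m : ℕ) : 0 ≤ dyckHeight p m := by
  rw [dyckHeight, sum_map_toInt, sub_nonneg, Nat.cast_le]
  exact p.count_D_le_count_U m

lemma DyckWord.dyckHeight_length (p : DyckWord) : dyckHeight p p.toList.length = 0 := by
  rw [dyckHeight, take_length, sum_map_toInt, p.count_U_eq_count_D, sub_self]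

end dyckHeight

section ArcStep

variable {α : Type*} [LinearOrder α] {f : α → α}

def arcStep (f : α → α) (i : α) : DyckStep := if i < f i then U else D

lemma toInt_arcStep_add_toInt_arcStep_apply (hf : Involutive f) (hfix : ∀ i, f i ≠ i) (i : α) :
    (arcStep f i).toInt + (arcStep f (f i)).toInt = 0 := by
  rcases lt_or_gt_of_ne (hfix i) with hi | hi <;>
    simp [arcStep, hf i, hi, hi.not_gt, toInt]

lemma sum_toInt_arcStep_eq_card (hf : Involutive f) (hfix : ∀ i, f i ≠ i) {s : Finset α}
    (hs : ∀ i ∈ s, f i ∉ s → i < f i) :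
    ∑ i ∈ s, (arcStep f i).toInt = #{i ∈ s | f i ∉ s} := by
  classical
  rw [← sum_filter_add_sum_filter_not s (fun i => f i ∈ s)]
  have hpaired : ∑ i ∈ s with f i ∈ s, (arcStep f i).toInt = 0 :=
    sum_involution (fun i _ => f i) (fun i _ => toInt_arcStep_add_toInt_arcStep_apply hf hfix i)
      (fun i _ _ => hfix i) (fun i hi => by simp_all [hf i]) (fun i _ => hf i)
  have hunpaired : ∀ i ∈ s.filter (f · ∉ s), (arcStep f i).toInt = 1 := fun i hi => by
    rw [mem_filter] at hi
    simp [arcStep, hs i hi.1 hi.2, toInt]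
  rw [hpaired, sum_congr rfl hunpaired, sum_const, nsmul_one, zero_add]

lemma two_mul_card_filter_lt_apply [Fintype α] (hf : Involutive f) (hfix : ∀ i, f i ≠ i) :
    2 * #{i | i < f i} = Fintype.card α := by
  classical
  have hswap : #{i | i < f i} = #{i | ¬ i < f i} := by
    refine card_nbij' f f (fun i hi => ?_) (fun i hi => ?_) (fun i _ => hf i) (fun i _ => hf i)
    all_goals
      simp only [coe_filter, Set.mem_ofPred_eq, mem_univ, true_and, hf i] at hi ⊢
      have := hfix i
      order
  rw [two_mul]
  nth_rewrite 2 [hswap]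
  rw [card_filter_add_card_filter_not, card_univ]

end ArcStep

section wordOf

variable {N : ℕ} {f : Fin N → Fin N}

variable (f) in
def wordOf : List DyckStep := List.ofFn (arcStep f)

variable (f) in
lemma dyckHeight_wordOf_sub {a m : ℕ} (ham : a ≤ m) :
    dyckHeight (wordOf f) m - dyckHeight (wordOf f) a
      = ∑ i with a ≤ i.val ∧ i.val < m, (arcStep f i).toInt := by
  have hprefix (m : ℕ) : dyckHeight (wordOf f) m = ∑ i with i.val < m, (arcStep f i).toInt := by
    rw [dyckHeight, wordOf, List.map_take, List.map_ofFn, List.sum_take_ofFn]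
    rfl
  simp only [hprefix, sum_filter, ← sum_sub_distrib]
  refine sum_congr rfl fun i _ => ?_
  split_ifs <;> omega

lemma dyckHeight_wordOf_eq_card (hf : Involutive f) (hfix : ∀ i, f i ≠ i) (m : ℕ) :
    dyckHeight (wordOf f) m = #{i | i.val < m ∧ m ≤ (f i).val} := by
  have := dyckHeight_wordOf_sub f (Nat.zero_le m)
  rw [dyckHeight_zero, sub_zero,
    sum_toInt_arcStep_eq_card hf hfix fun i hi hfi => by simp_all; omega] at this
  rw [this]
  congr 2
  ext i
  simp

def Function.Involutive.toDyckWord (hf : Involutive f) (hfix : ∀ i, f i ≠ i) : DyckWord where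
  toList := wordOf f
  count_U_eq_count_D := by
    have h := dyckHeight_wordOf_eq_card hf hfix N
    rw [filter_false_of_mem fun i _ => by omega, card_empty, dyckHeight_eq_count_sub_count,
      List.take_of_length_le (by simp [wordOf])] at h
    omega
  count_D_le_count_U m := by
    have h := dyckHeight_wordOf_eq_card hf hfix m
    rw [dyckHeight_eq_count_sub_count] at h
    omega

lemma Function.Involutive.two_mul_semilength_toDyckWord (hf : Involutive f)
    (hfix : ∀ i, f i ≠ i) : 2 * (hf.toDyckWord hfix).semilength = N := by
  rw [DyckWord.two_mul_semilength_eq_length]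
  simp [toDyckWord, wordOf]

end wordOf

namespace IsLinkPattern

variable {n : ℕ} {f : Fin (2 * n) → Fin (2 * n)}

lemma apply_mem_Ioo (hf : IsLinkPattern n f) {a k : Fin (2 * n)} (hk : k ∈ Set.Ioo a (f a)) :
    f k ∈ Set.Ioo a (f a) := by
  obtain ⟨hinv, -, hnc⟩ := hf
  have h1 : f k ≠ f a := fun h => by have := hinv.injective h; simp_all
  have h2 : f k ≠ a := fun h => by have := congrArg f h; rw [hinv] at this; simp_all
  have := hnc a k
  have := hnc (f k) a
  rw [hinv k] at this
  simp only [Set.mem_Ioo] at hk ⊢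
  omega

lemma apply_mem_Icc (hf : IsLinkPattern n f) {a i : Fin (2 * n)} (ha : a < f a)
    (hi : i ∈ Set.Icc a (f a)) : f i ∈ Set.Icc a (f a) := by
  obtain ⟨hai, hia⟩ := hi
  rcases (show a = i ∨ (a < i ∧ i < f a) ∨ i = f a by omega) with rfl | hi | rfl
  · exact ⟨ha.le, le_rfl⟩
  · exact Set.Ioo_subset_Icc_self (hf.apply_mem_Ioo hi)
  · rw [hf.1]; exact ⟨le_rfl, ha.le⟩

lemma dyckHeight_wordOf_apply_succ (hf : IsLinkPattern n f) {a : Fin (2 * n)} (ha : a < f a) :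
    dyckHeight (wordOf f) (f a + 1) = dyckHeight (wordOf f) a := by
  set s : Finset (Fin (2 * n)) := {i | a.val ≤ i.val ∧ i.val < (f a).val + 1}
  have hclosed : ∀ i ∈ s, f i ∈ s := fun i hi => by
    simp only [s, mem_filter, mem_univ, true_and] at hi ⊢
    have := hf.apply_mem_Icc ha (i := i) ⟨hi.1, by omega⟩
    simp only [Set.mem_Icc] at this
    omega
  have hsum := sum_toInt_arcStep_eq_card hf.1 hf.2.1 fun i hi hfi => absurd (hclosed i hi) hfi
  rw [filter_false_of_mem fun i hi => not_not.mpr (hclosed i hi), card_empty,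
    ← dyckHeight_wordOf_sub f (by omega)] at hsum
  omega

lemma dyckHeight_wordOf_lt (hf : IsLinkPattern n f) {a : Fin (2 * n)} (ha : a < f a) {m : ℕ}
    (ham : a < m) (hmf : m ≤ f a) : dyckHeight (wordOf f) a < dyckHeight (wordOf f) m := by
  set s : Finset (Fin (2 * n)) := {i | a.val ≤ i.val ∧ i.val < m}
  -- every arc leaving `s` starts in `s`, and the arc at `a` is one of them
  have hsum := sum_toInt_arcStep_eq_card hf.1 hf.2.1 (s := s) fun i hi hfi => by
    simp only [s, mem_filter, mem_univ, true_and] at hi hfi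
    rcases (show a = i ∨ a < i by omega) with rfl | hai
    · exact ha
    · have := hf.apply_mem_Ioo ⟨hai, (show i < f a by omega)⟩
      simp only [Set.mem_Ioo] at this
      omega
  have ha_mem : a ∈ s.filter (f · ∉ s) := by simp [s]; omega
  have := card_pos.mpr ⟨a, ha_mem⟩
  rw [← dyckHeight_wordOf_sub f ham.le] at hsum
  omega

lemma isArc (hf : IsLinkPattern n f) {a : Fin (2 * n)} (ha : a < f a) :
    IsArc (dyckHeight (wordOf f)) a (f a) :=
  ⟨ha, hf.dyckHeight_wordOf_apply_succ ha, fun _ ham hmf => hf.dyckHeight_wordOf_lt ha ham hmf⟩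

lemma isPartner (hf : IsLinkPattern n f) (i : Fin (2 * n)) :
    IsPartner (dyckHeight (wordOf f)) i (f i) := by
  rcases lt_or_gt_of_ne (hf.2.1 i) with hi | hi
  · exact Or.inr (by simpa [hf.1 i] using hf.isArc (a := f i) (by rwa [hf.1 i]))
  · exact Or.inl (hf.isArc hi)

lemma eq_of_wordOf_eq {g : Fin (2 * n) → Fin (2 * n)} (hf : IsLinkPattern n f)
    (hg : IsLinkPattern n g) (h : wordOf f = wordOf g) : f = g :=
  funext fun i => Fin.ext <| (hf.isPartner i).unique (h ▸ hg.isPartner i)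

lemma card_lt_apply (hf : IsLinkPattern n f) : Nat.card {i // i < f i} = n := by
  have := two_mul_card_filter_lt_apply hf.1 hf.2.1
  rw [Fintype.card_fin] at this
  rw [Nat.card_eq_fintype_card, Fintype.card_subtype]
  omega

end IsLinkPattern

section OfDyckWord

variable {n : ℕ} {f : Fin (2 * n) → Fin (2 * n)} {l : List DyckStep}

lemma isLinkPattern_of_isPartner
    (hpart : ∀ i : Fin (2 * n), IsPartner (dyckHeight l) i (f i)) : IsLinkPattern n f := by
  refine ⟨fun i => Fin.ext ((hpart (f i)).unique (hpart i).symm), fun i hi => ?_, ?_⟩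
  · have := hpart i
    rw [hi] at this
    rcases this with h | h <;> exact lt_irrefl _ h.1
  · rintro i j ⟨hij, hjf, hff⟩
    exact ((hpart i).isArc_of_lt (by omega)).not_cross ((hpart j).isArc_of_lt (by omega))
      hij hjf hff

lemma wordOf_eq_of_isPartner (hl : l.length = 2 * n)
    (hpart : ∀ i : Fin (2 * n), IsPartner (dyckHeight l) i (f i)) : wordOf f = l := by
  refine List.ext_getElem (by simp [wordOf, hl]) fun k _ hk' => ?_
  simp only [wordOf, List.getElem_ofFn, arcStep]
  split_ifs with hlt
  · exact ((getElem_eq_U_iff_dyckHeight_lt l hk').mpr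
      ((hpart _).isArc_of_lt hlt).lt_succ_left).symm
  · have hgt : f ⟨k, hl ▸ hk'⟩ < ⟨k, hl ▸ hk'⟩ :=
      lt_of_le_of_ne (not_lt.mp hlt) ((isLinkPattern_of_isPartner hpart).2.1 _)
    exact ((getElem_eq_D_iff_dyckHeight_lt l hk').mpr
      ((hpart _).isArc_of_gt hgt).succ_lt_right).symm

lemma DyckWord.exists_isPartner (p : DyckWord) {i : ℕ} (hi : i < p.toList.length) :
    ∃ j < p.toList.length, IsPartner (dyckHeight p.toList) i j := by
  have hstep := abs_dyckHeight_succ_sub_le p.toList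
  cases h : p.toList[i]
  · obtain ⟨j, hij, hj⟩ := exists_isArc_of_lt_succ hstep
      ((getElem_eq_U_iff_dyckHeight_lt _ hi).mp h) hi
      (by rw [p.dyckHeight_length]; exact p.dyckHeight_nonneg i)
    exact ⟨j, hj, Or.inl hij⟩
  · obtain ⟨j, hji, -⟩ := exists_isArc_of_succ_lt hstep
      ((getElem_eq_D_iff_dyckHeight_lt _ hi).mp h)
      (Nat.zero_le i) (by rw [dyckHeight_zero]; exact p.dyckHeight_nonneg _)
    exact ⟨j, by have := hji.1; omega, Or.inr hji⟩

lemma DyckWord.exists_isLinkPattern (p : DyckWord) (hp : p.semilength = n) :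
    ∃ f, IsLinkPattern n f ∧ wordOf f = p.toList := by
  have hl : p.toList.length = 2 * n := by rw [← p.two_mul_semilength_eq_length, hp]
  choose j hj hpart using fun i : Fin (2 * n) => p.exists_isPartner (i.2.trans_eq hl.symm)
  let f (i : Fin (2 * n)) : Fin (2 * n) := ⟨j i, (hj i).trans_eq hl⟩
  exact ⟨f, isLinkPattern_of_isPartner hpart, wordOf_eq_of_isPartner hl hpart⟩

end OfDyckWord

theorem card_linkPatterns (n : ℕ) :
    Nat.card {f : Fin (2 * n) → Fin (2 * n) // IsLinkPattern n f} = catalan n := by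
  let toDyck (f : {f // IsLinkPattern n f}) : {p : DyckWord // p.semilength = n} :=
    ⟨f.2.1.toDyckWord f.2.2.1, by have := f.2.1.two_mul_semilength_toDyckWord f.2.2.1; omega⟩
  have hbij : Bijective toDyck := by
    refine ⟨fun f g hfg => Subtype.ext (f.2.eq_of_wordOf_eq g.2 ?_), fun p => ?_⟩
    · exact congrArg (fun p => p.1.toList) hfg
    · obtain ⟨f, hf, hw⟩ := p.1.exists_isLinkPattern p.2
      exact ⟨⟨f, hf⟩, Subtype.ext (DyckWord.ext hw)⟩
  rw [Nat.card_eq_of_bijective toDyck hbij, Nat.card_eq_fintype_card,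
    DyckWord.card_dyckWord_semilength_eq_catalan]

def puncturedEquivSigma (n : ℕ) :
    {p : (Fin (2 * n) → Fin (2 * n)) × Option (Fin (2 * n)) // IsPuncturedLinkPattern n p} ≃
      Σ f : {f : Fin (2 * n) → Fin (2 * n) // IsLinkPattern n f}, Option {i // i < f.1 i} where
  toFun p := ⟨⟨p.1.1, p.2.1⟩, p.1.2.pmap Subtype.mk fun i hi => p.2.2 i hi⟩
  invFun q := ⟨(q.1.1, q.2.map Subtype.val), q.1.2, by
    simp only [Option.map_eq_some_iff]
    rintro i ⟨⟨j, hj⟩, -, rfl⟩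
    exact hj⟩
  left_inv := by rintro ⟨⟨f, _ | i⟩, hp⟩ <;> rfl
  right_inv := by rintro ⟨⟨f, hf⟩, _ | ⟨i, hi⟩⟩ <;> rfl

/-- The number of punctured link patterns on `2n` points equals `(n+1) · Catalan n`. -/
theorem card_puncturedLinkPatterns (n : ℕ) :
    Nat.card {p : (Fin (2 * n) → Fin (2 * n)) × Option (Fin (2 * n)) //
        IsPuncturedLinkPattern n p} = (n + 1) * catalan n := by
  classical
  rw [Nat.card_congr (puncturedEquivSigma n), Nat.card_sigma]
  rw [sum_congr rfl fun f _ => by rw [Finite.card_option, f.2.card_lt_apply], sum_const,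
    card_univ, smul_eq_mul, ← Nat.card_eq_fintype_card, card_linkPatterns, mul_comm]
end

section
/- Let Λ be a graph with all vertex degrees in {2,4} and 2n vertices of degree 2, equipped with an edge partition Γ = (γ_1,...,γ_m) into cycles of length at most 4. Define the local gyration H_γ on 2-colorings of a cycle γ: it swaps black/white on every edge unless γ has length 4 (or punctured length 2) and is colored alternately, in which case it is the identity. Then H_Γ = ∏_i H_{γ_i} maps fully-packed loop configurations of Λ to fully-packed loop configurations of Λ, i.e. preserves the property that every degree-4 vertex has two black and two white incident edges and every degree-2 vertex has one of each. -/
open Finset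

variable {V E : Type*} [Fintype V] [Fintype E] [DecidableEq V] [DecidableEq E]

/-- Multiplicity with which an edge `e` (with endpoints `ends e`) is incident to
the vertex `v`: `2` for a loop at `v`, `1` if `v` is one of the two distinct
endpoints, `0` otherwise. -/
def emult (ends : E → Sym2 V) (e : E) (v : V) : ℕ :=
  if ends e = Sym2.mk v v then 2 else if v ∈ ends e then 1 else 0

/-- Degree of a vertex. -/
def vdeg (ends : E → Sym2 V) (v : V) : ℕ := ∑ e : E, emult ends e v

/-- Black degree of a vertex under a 2-coloring `c` (`true` = black). -/
def bdeg (ends : E → Sym2 V) (c : E → Bool) (v : V) : ℕ :=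
  ∑ e : E, if c e then emult ends e v else 0

/-- Degree of a vertex within a set `S` of edges (e.g. one cycle of a cycle
decomposition). -/
def gdeg (ends : E → Sym2 V) (S : Finset E) (v : V) : ℕ := ∑ e ∈ S, emult ends e v

/-- Black degree of a vertex within a set `S` of edges. -/
def gbdeg (ends : E → Sym2 V) (c : E → Bool) (S : Finset E) (v : V) : ℕ :=
  ∑ e ∈ S, if c e then emult ends e v else 0

/-- A fully-packed loop configuration: every degree-4 vertex has two black and
two white incident edges, every degree-2 vertex one of each. -/
def IsFPL (ends : E → Sym2 V) (c : E → Bool) : Prop :=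
  ∀ v : V, (vdeg ends v = 4 → bdeg ends c v = 2) ∧ (vdeg ends v = 2 → bdeg ends c v = 1)

/-- A cycle is colored alternately iff each of its vertices has exactly one
black and one white among its two incident edges of the cycle. -/
def AltOn (ends : E → Sym2 V) (c : E → Bool) (S : Finset E) : Prop :=
  ∀ v : V, gdeg ends S v = 2 → gbdeg ends c S v = 1

instance (ends : E → Sym2 V) (c : E → Bool) (S : Finset E) : Decidable (AltOn ends c S) := by
  unfold AltOn; infer_instance

/-- The gyration `H_Γ = ∏ H_γ` associated to a cycle decomposition, given by the
class function `cls` (`cls e` is the cycle containing `e`) and a marking `punct`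
of punctured cycles: on each cycle the colors are swapped, except on cycles of
length 4 (or punctured cycles of length 2) that are colored alternately, where
the local gyration is the identity. -/
def gyr (ends : E → Sym2 V) (cls : E → Finset E) (punct : Finset E → Bool)
    (c : E → Bool) : E → Bool :=
  fun e =>
    if ((cls e).card = 4 ∨ ((cls e).card = 2 ∧ punct (cls e) = true)) ∧ AltOn ends c (cls e)
    then c e else !(c e)

/-
On each cycle `γ` every vertex has `γ`-degree `0` or `2`. If `H_γ` swaps the colors, the new black
`γ`-degree of a vertex is its old white `γ`-degree; if `H_γ` is the identity, `γ` is alternating,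
so the black `γ`-degree is half the `γ`-degree. Either way the new and old black `γ`-degrees add
up to the `γ`-degree. Summing over the cycles, which partition the edges, the new and old black
degrees of a vertex add up to its degree, and `4 - 2 = 2`, `2 - 1 = 1`.
-/

lemma sum_univ_eq_sum_image_sum {cls : E → Finset E} (hmem : ∀ e, e ∈ cls e)
    (hcls : ∀ e e', e' ∈ cls e → cls e' = cls e) {M : Type*} [AddCommMonoid M] (f : E → M) :
    ∑ e, f e = ∑ S ∈ univ.image cls, ∑ e ∈ S, f e := by
  rw [← sum_fiberwise_of_maps_to (g := cls) fun e _ => mem_image_of_mem cls (mem_univ e)]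
  refine sum_congr rfl fun S hS => ?_
  obtain ⟨e₀, -, rfl⟩ := mem_image.mp hS
  congr 1
  ext e
  simp only [mem_filter, mem_univ, true_and]
  exact ⟨fun h => h ▸ hmem e, hcls e₀ e⟩

section Gyration

omit [Fintype V] [Fintype E] [DecidableEq E]

variable (ends : E → Sym2 V)

lemma gbdeg_le_gdeg (c : E → Bool) (S : Finset E) (v : V) :
    gbdeg ends c S v ≤ gdeg ends S v :=
  sum_le_sum fun e _ => by split <;> simp

lemma gbdeg_congr {c c' : E → Bool} {S : Finset E} (h : ∀ e ∈ S, c' e = c e) (v : V) :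
    gbdeg ends c' S v = gbdeg ends c S v :=
  sum_congr rfl fun e he => by rw [h e he]

lemma gbdeg_add_gbdeg_of_forall_eq_not {c c' : E → Bool} {S : Finset E}
    (h : ∀ e ∈ S, c' e = !c e) (v : V) :
    gbdeg ends c' S v + gbdeg ends c S v = gdeg ends S v := by
  rw [gbdeg, gbdeg, gdeg, ← sum_add_distrib]
  refine sum_congr rfl fun e he => ?_
  rw [h e he]
  cases c e <;> simp

lemma gbdeg_add_gbdeg_of_altOn {c : E → Bool} {S : Finset E} (halt : AltOn ends c S) {v : V}
    (hv : gdeg ends S v = 0 ∨ gdeg ends S v = 2) :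
    gbdeg ends c S v + gbdeg ends c S v = gdeg ends S v := by
  rcases hv with h0 | h2
  · have := gbdeg_le_gdeg ends c S v
    omega
  · rw [halt v h2, h2]

variable {cls : E → Finset E} (hcls : ∀ e e', e' ∈ cls e → cls e' = cls e)
  (hloc : ∀ e v, gdeg ends (cls e) v = 0 ∨ gdeg ends (cls e) v = 2)
include hcls hloc

lemma gbdeg_gyr_add_gbdeg [Fintype V] (punct : Finset E → Bool) (c : E → Bool) (e₀ : E) (v : V) :
    gbdeg ends (gyr ends cls punct c) (cls e₀) v + gbdeg ends c (cls e₀) v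
      = gdeg ends (cls e₀) v := by
  by_cases hfix : ((cls e₀).card = 4 ∨ ((cls e₀).card = 2 ∧ punct (cls e₀) = true)) ∧
      AltOn ends c (cls e₀)
  · have hid : ∀ e ∈ cls e₀, gyr ends cls punct c e = c e := fun e he => by
      simp only [gyr, hcls e₀ e he, if_pos hfix]
    rw [gbdeg_congr ends hid]
    exact gbdeg_add_gbdeg_of_altOn ends hfix.2 (hloc e₀ v)
  · refine gbdeg_add_gbdeg_of_forall_eq_not ends (fun e he => ?_) v
    simp only [gyr, hcls e₀ e he, if_neg hfix]

lemma bdeg_gyr_add_bdeg [Fintype V] [Fintype E] [DecidableEq E] (hmem : ∀ e, e ∈ cls e)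
    (punct : Finset E → Bool) (c : E → Bool) (v : V) :
    bdeg ends (gyr ends cls punct c) v + bdeg ends c v = vdeg ends v := by
  rw [bdeg, bdeg, vdeg, sum_univ_eq_sum_image_sum hmem hcls, sum_univ_eq_sum_image_sum hmem hcls,
    sum_univ_eq_sum_image_sum hmem hcls, ← sum_add_distrib]
  refine sum_congr rfl fun S hS => ?_
  obtain ⟨e₀, -, rfl⟩ := mem_image.mp hS
  exact gbdeg_gyr_add_gbdeg ends hcls hloc punct c e₀ v

end Gyration

theorem gyration_preserves_FPL_general (ends : E → Sym2 V) (cls : E → Finset E)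
    (punct : Finset E → Bool)
    (hmem : ∀ e, e ∈ cls e)
    (hcls : ∀ e e', e' ∈ cls e → cls e' = cls e)
    (hloc : ∀ e v, gdeg ends (cls e) v = 0 ∨ gdeg ends (cls e) v = 2)
    (c : E → Bool) (hc : IsFPL ends c) :
    IsFPL ends (gyr ends cls punct c) := by
  intro v
  have hsum := bdeg_gyr_add_bdeg ends hcls hloc hmem punct c v
  obtain ⟨h4, h2⟩ := hc v
  exact ⟨fun hv => by have := h4 hv; omega, fun hv => by have := h2 hv; omega⟩

/-- **Gyration maps FPLs to FPLs.**  Let `Λ` be a graph with all vertex degrees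
in `{2, 4}`, with an edge partition `Γ` into cycles of length at most 4 (each
vertex having degree 0 or 2 within each cycle).  Then `H_Γ` preserves the
fully-packed loop property. -/
theorem gyration_preserves_FPL (ends : E → Sym2 V) (cls : E → Finset E)
    (punct : Finset E → Bool)
    (hmem : ∀ e, e ∈ cls e)
    (hcls : ∀ e e', e' ∈ cls e → cls e' = cls e)
    (hlen : ∀ e, (cls e).card ≤ 4)
    (hloc : ∀ e v, gdeg ends (cls e) v = 0 ∨ gdeg ends (cls e) v = 2)
    (hdeg : ∀ v, vdeg ends v = 2 ∨ vdeg ends v = 4)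
    (c : E → Bool) (hc : IsFPL ends c) :
    IsFPL ends (gyr ends cls punct c) :=
  gyration_preserves_FPL_general ends cls punct hmem hcls hloc c hc
end

section
/- Let (h_t)_{t∈ℤ} be a p-periodic integer sequence such that: if h_t − t is even then h_{t+1} ∈ {h_t, h_t+1}, and if h_t − t is odd then h_{t+1} ∈ {h_t−1, h_t}. Then for any fixed value h, within one period the number of times t with h_t = h and h_t − t odd equals the number of times t with h_t = h and h_t − t even. Consequently, for any function F, Σ_{t in a period, h_t − t odd} F(h_t) = Σ_{t in a period, h_t − t even} F(h_t). -/
open Finset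

/-- **Equidistribution of visits between the two parity classes.**
Let `(h_t)_{t∈ℤ}` be a `p`-periodic integer sequence (`p` even) such that:
if `h_t − t` is even then `h_{t+1} ∈ {h_t, h_t+1}`, and if `h_t − t` is odd then
`h_{t+1} ∈ {h_t−1, h_t}`.  Then for any fixed value `v`, within one period the
number of times `t` with `h_t = v` and `h_t − t` odd equals the number of times
with `h_t = v` and `h_t − t` even.  Consequently, for any function `F`,
`Σ_{t, h_t−t odd} F(h_t) = Σ_{t, h_t−t even} F(h_t)` over one period. -/
theorem periodic_orbit_equidistribution {M : Type*} [AddCommMonoid M]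
    (h : ℤ → ℤ) (p : ℕ) (hpe : Even p)
    (hper : ∀ t : ℤ, h (t + p) = h t)
    (hstep : ∀ t : ℤ,
      (Even (h t - t) → h (t + 1) = h t ∨ h (t + 1) = h t + 1) ∧
      (¬ Even (h t - t) → h (t + 1) = h t - 1 ∨ h (t + 1) = h t)) :
    (∀ v : ℤ,
      ((Finset.range p).filter
        (fun t : ℕ => h (t : ℤ) = v ∧ ¬ Even (h (t : ℤ) - (t : ℤ)))).card =
      ((Finset.range p).filter
        (fun t : ℕ => h (t : ℤ) = v ∧ Even (h (t : ℤ) - (t : ℤ)))).card) ∧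
    (∀ F : ℤ → M,
      ∑ t ∈ (Finset.range p).filter (fun t : ℕ => ¬ Even (h (t : ℤ) - (t : ℤ))),
        F (h (t : ℤ)) =
      ∑ t ∈ (Finset.range p).filter (fun t : ℕ => Even (h (t : ℤ) - (t : ℤ))),
        F (h (t : ℤ))) := by
  classical
  -- the auxiliary ±1 walk
  set f : ℤ → ℤ := fun t => if Even (h t - t) then h t else h t - 1 with hfdef
  have hfh : ∀ t : ℤ, (Even (h t - t) ∧ f t = h t) ∨ (¬ Even (h t - t) ∧ f t = h t - 1) := by
    intro t; by_cases hc : Even (h t - t)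
    · exact Or.inl ⟨hc, by simp [hfdef, hc]⟩
    · exact Or.inr ⟨hc, by simp [hfdef, hc]⟩
  have master : ∀ t : ℤ, (f (t + 1) = f t + 1 ∧ Even (h (t + 1) - (t + 1))) ∨
      (f (t + 1) = f t - 1 ∧ ¬ Even (h (t + 1) - (t + 1))) := by
    intro t
    have h0 := hfh t
    have h1 := hfh (t + 1)
    have hs1 := (hstep t).1
    have hs2 := (hstep t).2
    simp only [Int.even_iff] at h0 h1 hs1 hs2 ⊢
    omega
  have hp2 : ((p : ℤ)) % 2 = 0 := by
    rcases hpe with ⟨k, hk⟩; subst hk; push_cast; omega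
  have hparper : ∀ t : ℤ, (Even (h (t + p) - (t + p)) ↔ Even (h t - t)) := by
    intro t
    rw [hper t]
    simp only [Int.even_iff]
    omega
  have hfper : ∀ t : ℤ, f (t + p) = f t := by
    intro t
    simp only [hfdef]
    exact if_congr (hparper t) (hper t) (by rw [hper t])
  -- shift lemma for periodic integer functions
  have shift : ∀ g : ℤ → ℤ, (∀ t : ℤ, g (t + p) = g t) →
      (∑ t ∈ range p, g ((t : ℤ) + 1)) = ∑ t ∈ range p, g (t : ℤ) := by
    intro g hg
    have h1 := Finset.sum_range_succ (fun t : ℕ => g (t : ℤ)) p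
    have h2 := Finset.sum_range_succ' (fun t : ℕ => g (t : ℤ)) p
    simp only [Nat.cast_add, Nat.cast_one, Nat.cast_zero] at h1 h2
    have h3 : g ((p : ℕ) : ℤ) = g 0 := by simpa using hg 0
    linarith [h1, h2, h3]
  -- the key counting identity, in ℤ
  have key : ∀ v : ℤ,
      (∑ t ∈ range p, (if h (t : ℤ) = v ∧ ¬ Even (h (t : ℤ) - (t : ℤ)) then (1 : ℤ) else 0)) =
      ∑ t ∈ range p, (if h (t : ℤ) = v ∧ Even (h (t : ℤ) - (t : ℤ)) then (1 : ℤ) else 0) := by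
    intro v
    have hAiff : ∀ t : ℤ, ((h (t + 1) = v ∧ ¬ Even (h (t + 1) - (t + 1))) ↔
        (f t = v ∧ f (t + 1) = v - 1)) := by
      intro t
      have h1 := master t
      have h2 := hfh (t + 1)
      simp only [Int.even_iff] at h1 h2 ⊢
      omega
    have hBiff : ∀ t : ℤ, ((h (t + 1) = v ∧ Even (h (t + 1) - (t + 1))) ↔
        (f t = v - 1 ∧ f (t + 1) = v)) := by
      intro t
      have h1 := master t
      have h2 := hfh (t + 1)
      simp only [Int.even_iff] at h1 h2 ⊢
      omega
    -- telescoping: up-crossings minus down-crossings of the level `v - 1/2`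
    have tele : ∀ t : ℤ,
        (if f t = v - 1 ∧ f (t + 1) = v then (1 : ℤ) else 0) -
          (if f t = v ∧ f (t + 1) = v - 1 then (1 : ℤ) else 0) =
        (if v ≤ f (t + 1) then (1 : ℤ) else 0) - (if v ≤ f t then (1 : ℤ) else 0) := by
      intro t
      rcases master t with ⟨h1, _⟩ | ⟨h1, _⟩ <;> split_ifs <;> omega
    have htele0 : (∑ t ∈ range p,
        ((if v ≤ f ((t : ℤ) + 1) then (1 : ℤ) else 0) -
          (if v ≤ f (t : ℤ) then (1 : ℤ) else 0))) = 0 := by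
      have hts := Finset.sum_range_sub (fun t : ℕ => if v ≤ f (t : ℤ) then (1 : ℤ) else 0) p
      simp only [Nat.cast_add, Nat.cast_one, Nat.cast_zero] at hts
      rw [hts]
      have hf0 : f ((p : ℕ) : ℤ) = f 0 := by simpa using hfper 0
      rw [hf0]
      ring
    have hud : (∑ t ∈ range p, (if f (t : ℤ) = v - 1 ∧ f ((t : ℤ) + 1) = v then (1 : ℤ) else 0)) =
        ∑ t ∈ range p, (if f (t : ℤ) = v ∧ f ((t : ℤ) + 1) = v - 1 then (1 : ℤ) else 0) := by
      have h1 : (∑ t ∈ range p,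
          ((if f (t : ℤ) = v - 1 ∧ f ((t : ℤ) + 1) = v then (1 : ℤ) else 0) -
            (if f (t : ℤ) = v ∧ f ((t : ℤ) + 1) = v - 1 then (1 : ℤ) else 0))) = 0 := by
        have e : (∑ t ∈ range p,
            ((if f (t : ℤ) = v - 1 ∧ f ((t : ℤ) + 1) = v then (1 : ℤ) else 0) -
              (if f (t : ℤ) = v ∧ f ((t : ℤ) + 1) = v - 1 then (1 : ℤ) else 0))) =
            ∑ t ∈ range p, ((if v ≤ f ((t : ℤ) + 1) then (1 : ℤ) else 0) -
              (if v ≤ f (t : ℤ) then (1 : ℤ) else 0)) :=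
          Finset.sum_congr rfl (fun t _ => tele (t : ℤ))
        rw [e]
        exact htele0
      rw [Finset.sum_sub_distrib] at h1
      linarith
    -- shift the original counts by one step
    have hApiff : ∀ t : ℤ, ((h t = v ∧ ¬ Even (h t - t)) ↔
        (h (t + p) = v ∧ ¬ Even (h (t + p) - (t + p)))) := by
      intro t; rw [hparper t, hper t]
    have hBpiff : ∀ t : ℤ, ((h t = v ∧ Even (h t - t)) ↔
        (h (t + p) = v ∧ Even (h (t + p) - (t + p)))) := by
      intro t; rw [hparper t, hper t]
    have hAshift := shift (fun t : ℤ => if h t = v ∧ ¬ Even (h t - t) then (1 : ℤ) else 0)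
      (fun t => by simp only [((hApiff t).symm : _ ↔ _)])
    have hBshift := shift (fun t : ℤ => if h t = v ∧ Even (h t - t) then (1 : ℤ) else 0)
      (fun t => by simp only [((hBpiff t).symm : _ ↔ _)])
    calc (∑ t ∈ range p, (if h (t : ℤ) = v ∧ ¬ Even (h (t : ℤ) - (t : ℤ)) then (1 : ℤ) else 0))
        = ∑ t ∈ range p,
            (if h ((t : ℤ) + 1) = v ∧ ¬ Even (h ((t : ℤ) + 1) - ((t : ℤ) + 1)) then (1 : ℤ) else 0) :=
          hAshift.symm
      _ = ∑ t ∈ range p, (if f (t : ℤ) = v ∧ f ((t : ℤ) + 1) = v - 1 then (1 : ℤ) else 0) :=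
          Finset.sum_congr rfl (fun t _ => by rw [if_congr (hAiff (t : ℤ)) rfl rfl])
      _ = ∑ t ∈ range p, (if f (t : ℤ) = v - 1 ∧ f ((t : ℤ) + 1) = v then (1 : ℤ) else 0) :=
          hud.symm
      _ = ∑ t ∈ range p,
            (if h ((t : ℤ) + 1) = v ∧ Even (h ((t : ℤ) + 1) - ((t : ℤ) + 1)) then (1 : ℤ) else 0) :=
          Finset.sum_congr rfl (fun t _ => by rw [if_congr (hBiff (t : ℤ)) rfl rfl])
      _ = ∑ t ∈ range p, (if h (t : ℤ) = v ∧ Even (h (t : ℤ) - (t : ℤ)) then (1 : ℤ) else 0) :=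
          hBshift
  -- part 1: cardinalities
  have card_eq : ∀ v : ℤ,
      ((Finset.range p).filter
        (fun t : ℕ => h (t : ℤ) = v ∧ ¬ Even (h (t : ℤ) - (t : ℤ)))).card =
      ((Finset.range p).filter
        (fun t : ℕ => h (t : ℤ) = v ∧ Even (h (t : ℤ) - (t : ℤ)))).card := by
    intro v
    have hk := key v
    have hca : (((Finset.range p).filter
        (fun t : ℕ => h (t : ℤ) = v ∧ ¬ Even (h (t : ℤ) - (t : ℤ)))).card : ℤ) =
        ∑ t ∈ range p, (if h (t : ℤ) = v ∧ ¬ Even (h (t : ℤ) - (t : ℤ)) then (1 : ℤ) else 0) := by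
      rw [Finset.card_filter]
      push_cast
      rfl
    have hcb : (((Finset.range p).filter
        (fun t : ℕ => h (t : ℤ) = v ∧ Even (h (t : ℤ) - (t : ℤ)))).card : ℤ) =
        ∑ t ∈ range p, (if h (t : ℤ) = v ∧ Even (h (t : ℤ) - (t : ℤ)) then (1 : ℤ) else 0) := by
      rw [Finset.card_filter]
      push_cast
      rfl
    exact_mod_cast hca.trans (hk.trans hcb.symm)
  refine ⟨card_eq, ?_⟩
  -- part 2: sums, via fiberwise decomposition
  intro F
  have hfib : ∀ (P : ℕ → Prop) (_ : DecidablePred P),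
      (∑ t ∈ (range p).filter (fun t => P t), F (h (t : ℤ))) =
      ∑ b ∈ (range p).image (fun t : ℕ => h (t : ℤ)),
        (((range p).filter (fun t : ℕ => (P t ∧ h (t : ℤ) = b))).card) • F b := by
    intro P _
    rw [Finset.sum_comp F (fun t : ℕ => h (t : ℤ))]
    simp only [Finset.filter_filter]
    refine Finset.sum_subset (Finset.image_subset_image (Finset.filter_subset _ _)) ?_
    intro b _ hb
    have hemp : ((range p).filter (fun t : ℕ => P t ∧ h (t : ℤ) = b)) = ∅ := by
      rw [Finset.eq_empty_iff_forall_notMem]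
      intro t ht
      rw [Finset.mem_filter] at ht
      exact hb (Finset.mem_image.mpr ⟨t, Finset.mem_filter.mpr ⟨ht.1, ht.2.1⟩, ht.2.2⟩)
    rw [hemp]
    simp
  rw [hfib (fun t => ¬ Even (h (t : ℤ) - (t : ℤ))) inferInstance,
    hfib (fun t => Even (h (t : ℤ) - (t : ℤ))) inferInstance]
  refine Finset.sum_congr rfl (fun b _ => ?_)
  congr 1
  have h1 : ((range p).filter
      (fun t : ℕ => (¬ Even (h (t : ℤ) - (t : ℤ)) ∧ h (t : ℤ) = b))) =
      ((range p).filter (fun t : ℕ => h (t : ℤ) = b ∧ ¬ Even (h (t : ℤ) - (t : ℤ)))) := by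
    apply Finset.filter_congr; intro t _; exact and_comm
  have h2 : ((range p).filter
      (fun t : ℕ => (Even (h (t : ℤ) - (t : ℤ)) ∧ h (t : ℤ) = b))) =
      ((range p).filter (fun t : ℕ => h (t : ℤ) = b ∧ Even (h (t : ℤ) - (t : ℤ)))) := by
    apply Finset.filter_congr; intro t _; exact and_comm
  rw [h1, h2]
  exact card_eq b
end
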